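/- Let ℓ > 0, 1 < p < ∞, γ : ℝ → ℝ continuous, strictly increasing and surjective with γ(0) = 0, f ∈ L^1(0,ℓ) and a, b ∈ ℝ. For ε ∈ ℝ, let v_ε = γ ∘ u_ε denote the weak solution of (P^{γ,f}_{p,a,b+ε}), with u_ε its C¹ representative. If ε > 0, then u_0(x) ≤ u_ε(x) for all x ∈ [0,ℓ] and u_0(ℓ) < u_ε(ℓ). If ε < 0, then u_ε(x) ≤ u_0(x) for all x ∈ [0,ℓ] and u_ε(ℓ) < u_0(ℓ). -/

import Mathlib

open MeasureTheory Set Filter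

noncomputable section

/-- A connected compact metric graph: finite nonempty vertex set, finite edge set,
initial/terminal vertex maps without loops, positive edge lengths, no multiple edges,
and connectedness via paths of edges. -/
structure MetricGraph where
  V : Type
  E : Type
  fintypeV : Fintype V
  fintypeE : Fintype E
  nonemptyV : Nonempty V
  ι : E → V
  τ : E → V
  no_loops : ∀ e, ι e ≠ τ e
  len : E → ℝ
  len_pos : ∀ e, 0 < len e
  no_multi : ∀ e e', ({ι e, τ e} : Set V) = ({ι e', τ e'} : Set V) → e = e'
  connected : ∀ v w : V,
    Relation.ReflTransGen (fun a b => ∃ e, (ι e = a ∧ τ e = b) ∨ (ι e = b ∧ τ e = a)) v w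

/-- Sum over the edges of the graph. -/
def edgeSum (G : MetricGraph) (F : G.E → ℝ) : ℝ :=
  letI := G.fintypeE
  ∑ e, F e

/-- Sum over the vertices of the graph. -/
def vertexSum (G : MetricGraph) (F : G.V → ℝ) : ℝ :=
  letI := G.fintypeV
  ∑ v, F v

/-- Number of vertices. -/
def vertexCard (G : MetricGraph) : ℕ :=
  letI := G.fintypeV
  Fintype.card G.V

/-- ρ_p(r) = |r|^(p-2) r. -/
def rho (p r : ℝ) : ℝ := |r| ^ (p - 2) * r

/-- `(u, u')` is in the Sobolev space W^{1,p}(0,ℓ): `u'` is integrable with `|u'|^p`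
integrable on (0,ℓ), and `u` is absolutely continuous on [0,ℓ] with derivative `u'`. -/
def IntervalSobolev (ℓ p : ℝ) (u u' : ℝ → ℝ) : Prop :=
  IntegrableOn u' (Ioo 0 ℓ) volume ∧
  IntegrableOn (fun x => |u' x| ^ p) (Ioo 0 ℓ) volume ∧
  ∀ x ∈ Icc (0:ℝ) ℓ, u x = u 0 + ∫ t in (0:ℝ)..x, u' t

/-- `(u, u')` is in W^{1,p̄}(G), continuous at the vertices with vertex values `uV`. -/
def GraphSobolev (G : MetricGraph) (p : G.E → ℝ) (u u' : G.E → ℝ → ℝ) (uV : G.V → ℝ) : Prop :=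
  (∀ e, IntervalSobolev (G.len e) (p e) (u e) (u' e)) ∧
  (∀ e, u e 0 = uV (G.ι e)) ∧
  (∀ e, u e (G.len e) = uV (G.τ e))

/-- `v` is a weak solution of the graph problem (P_ω^f) with data `u, u', uV`. -/
def SolvesGraphProblem (G : MetricGraph) (p : G.E → ℝ) (γ : G.E → ℝ → ℝ)
    (f : G.E → ℝ → ℝ) (ω : G.V → ℝ)
    (v : G.E → ℝ → ℝ) (u u' : G.E → ℝ → ℝ) (uV : G.V → ℝ) : Prop :=
  (∀ e, IntegrableOn (v e) (Ioo 0 (G.len e)) volume) ∧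
  GraphSobolev G p u u' uV ∧
  (∀ e, ∀ᵐ x ∂(volume.restrict (Ioo 0 (G.len e))), v e x = γ e (u e x)) ∧
  ∀ φ φ' : G.E → ℝ → ℝ, ∀ φV : G.V → ℝ, GraphSobolev G p φ φ' φV →
    edgeSum G (fun e => ∫ x in Ioo 0 (G.len e), v e x * φ e x)
      + edgeSum G (fun e => ∫ x in Ioo 0 (G.len e), rho (p e) (u' e x) * φ' e x)
    = edgeSum G (fun e => ∫ x in Ioo 0 (G.len e), f e x * φ e x)
      + vertexSum G (fun w => ω w * φV w)

/-- `v` is a weak solution of the graph problem (P_ω^f). -/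
def IsGraphWeakSolution (G : MetricGraph) (p : G.E → ℝ) (γ : G.E → ℝ → ℝ)
    (f : G.E → ℝ → ℝ) (ω : G.V → ℝ) (v : G.E → ℝ → ℝ) : Prop :=
  ∃ u u' uV, SolvesGraphProblem G p γ f ω v u u' uV

/-- `v` is a weak solution of the interval Neumann problem (P^{γ,f}_{p,a,b}),
with associated Sobolev function `u` (derivative `u'`). -/
def SolvesNeumann (ℓ p : ℝ) (γ f : ℝ → ℝ) (a b : ℝ) (v u u' : ℝ → ℝ) : Prop :=
  IntegrableOn v (Ioo 0 ℓ) volume ∧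
  IntervalSobolev ℓ p u u' ∧
  (∀ᵐ x ∂(volume.restrict (Ioo 0 ℓ)), v x = γ (u x)) ∧
  ∀ φ φ' : ℝ → ℝ, IntervalSobolev ℓ p φ φ' →
    (∫ x in Ioo 0 ℓ, v x * φ x) + (∫ x in Ioo 0 ℓ, rho p (u' x) * φ' x)
    = (∫ x in Ioo 0 ℓ, f x * φ x) + a * φ 0 + b * φ ℓ

/-- `v` is a weak solution of the interval Neumann problem (P^{γ,f}_{p,a,b}). -/
def IsNeumannWeakSolution (ℓ p : ℝ) (γ f : ℝ → ℝ) (a b : ℝ) (v : ℝ → ℝ) : Prop :=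
  ∃ u u', SolvesNeumann ℓ p γ f a b v u u'

end

/-! Subtract the two weak formulations. For `W = u₁ - u₂` and a test function `φ` this gives
`∫ (γ u₁ - γ u₂) φ + ∫ (ρ_p u₁' - ρ_p u₂') φ' = (b₁ - b₂) φ(ℓ)`.
With `φ = W⁺`, whose derivative is `W'` on `{W > 0}` and `0` elsewhere, both integrands are
nonnegative by monotonicity of `γ` and `ρ_p`, while the right side is `≤ 0` when `b₁ ≤ b₂`;
so `(γ u₁ - γ u₂) W⁺` vanishes and `u₁ ≤ u₂`. If `b₁ < b₂` but `u₁(ℓ) ≥ u₂(ℓ)`, the test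
function `φ = W` forces `u₁ = u₂`, and then `φ = 1` gives `b₁ = b₂`. -/

open Topology

section Rho

variable {p : ℝ}

theorem rho_neg (p r : ℝ) : rho p (-r) = -rho p r := by
  simp [rho]

theorem rho_of_nonneg (hp : 1 < p) {r : ℝ} (hr : 0 ≤ r) : rho p r = r ^ (p - 1) := by
  rcases hr.eq_or_lt with rfl | hr
  · simp [rho, Real.zero_rpow (by linarith : p - 1 ≠ 0)]
  · rw [rho, abs_of_pos hr, ← Real.rpow_add_one hr.ne']
    ring_nf

theorem abs_rho (hp : 1 < p) (r : ℝ) : |rho p r| = |r| ^ (p - 1) := by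
  rw [← rho_of_nonneg hp (abs_nonneg r), rho, rho, abs_mul, abs_abs,
    abs_of_nonneg (Real.rpow_nonneg (abs_nonneg r) _)]

theorem rho_monotone (hp : 1 < p) : Monotone (rho p) := by
  refine monotone_of_odd_of_monotoneOn_nonneg (rho_neg p) fun s hs t ht hst => ?_
  rw [rho_of_nonneg hp hs, rho_of_nonneg hp ht]
  exact Real.rpow_le_rpow hs hst (by linarith)

theorem continuous_rho (hp : 1 < p) : Continuous (rho p) := by
  refine continuous_iff_continuousAt.2 fun r => ?_
  rcases eq_or_ne r 0 with rfl | hr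
  · have hpow : Tendsto (fun s : ℝ => |s| ^ (p - 1)) (𝓝 0) (𝓝 0) := by
      simpa [Real.zero_rpow (by linarith : p - 1 ≠ 0)] using
        (continuous_abs.rpow_const fun _ => Or.inr (by linarith : 0 ≤ p - 1)).tendsto 0
    simpa [ContinuousAt, rho] using
      squeeze_zero_norm (fun s => (abs_rho hp s).le) hpow
  · exact (continuous_abs.continuousAt.rpow_const (Or.inl (abs_ne_zero.2 hr))).mul
      continuousAt_id

end Rho

namespace IntervalSobolev

variable {ℓ p : ℝ} {w w' : ℝ → ℝ}

theorem integrableOn_Icc (hw : IntervalSobolev ℓ p w w') : IntegrableOn w' (Icc 0 ℓ) := by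
  rw [integrableOn_Icc_iff_integrableOn_Ioo]
  exact hw.1

theorem intervalIntegrable (hw : IntervalSobolev ℓ p w w') {x : ℝ} (hx : x ∈ Icc 0 ℓ) :
    IntervalIntegrable w' volume 0 x :=
  (intervalIntegrable_iff_integrableOn_Icc_of_le hx.1).2
    (hw.integrableOn_Icc.mono_set (Icc_subset_Icc_right hx.2))

theorem continuousOn (hℓ : 0 ≤ ℓ) (hw : IntervalSobolev ℓ p w w') :
    ContinuousOn w (Icc 0 ℓ) := by
  have hprim := intervalIntegral.continuousOn_primitive_interval (a := 0) (b := ℓ)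
    (by rw [uIcc_of_le hℓ]; exact hw.integrableOn_Icc)
  rw [uIcc_of_le hℓ] at hprim
  exact (continuousOn_const.add hprim).congr hw.2.2

theorem hasDerivAt (hw : IntervalSobolev ℓ p w w') (hc : ContinuousOn w' (Icc 0 ℓ))
    {x : ℝ} (hx : x ∈ Ioo 0 ℓ) : HasDerivAt w (w' x) x := by
  have hc' : ContinuousOn w' (Ioo 0 ℓ) := hc.mono Ioo_subset_Icc_self
  have hprim := intervalIntegral.integral_hasDerivAt_right
    (hw.intervalIntegrable (Ioo_subset_Icc_self hx))
    (hc'.stronglyMeasurableAtFilter isOpen_Ioo x hx) (hc'.continuousAt (isOpen_Ioo.mem_nhds hx))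
  refine (hprim.const_add (w 0)).congr_of_eventuallyEq ?_
  filter_upwards [isOpen_Ioo.mem_nhds hx] with y hy
  exact hw.2.2 y (Ioo_subset_Icc_self hy)

theorem exists_lipschitzOnWith (hw : IntervalSobolev ℓ p w w') (hc : ContinuousOn w' (Icc 0 ℓ)) :
    ∃ K, LipschitzOnWith K w (Icc 0 ℓ) := by
  obtain ⟨M, hM⟩ := isCompact_Icc.exists_bound_of_continuousOn hc
  refine ⟨_, LipschitzOnWith.of_dist_le' (K := M) fun x hx y hy => ?_⟩
  rw [dist_eq_norm, hw.2.2 x hx, hw.2.2 y hy, add_sub_add_left_eq_sub,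
    intervalIntegral.integral_interval_sub_left (hw.intervalIntegrable hx)
      (hw.intervalIntegrable hy), Real.dist_eq]
  exact intervalIntegral.norm_integral_le_of_norm_le_const fun t ht =>
    hM t (uIcc_subset_Icc hy hx (uIoc_subset_uIcc ht))

theorem of_continuousOn (hp : 0 ≤ p) (hc : ContinuousOn w' (Icc 0 ℓ))
    (hw : ∀ x ∈ Icc (0 : ℝ) ℓ, w x = w 0 + ∫ t in (0 : ℝ)..x, w' t) :
    IntervalSobolev ℓ p w w' :=
  ⟨hc.integrableOn_Icc.mono_set Ioo_subset_Icc_self,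
    (hc.abs.rpow_const fun _ _ => Or.inr hp).integrableOn_Icc.mono_set Ioo_subset_Icc_self, hw⟩

theorem sub (hp : 0 ≤ p) {v v' : ℝ → ℝ} (hw : IntervalSobolev ℓ p w w')
    (hv : IntervalSobolev ℓ p v v') (hwc : ContinuousOn w' (Icc 0 ℓ))
    (hvc : ContinuousOn v' (Icc 0 ℓ)) :
    IntervalSobolev ℓ p (fun x => w x - v x) (fun x => w' x - v' x) :=
  of_continuousOn hp (hwc.sub hvc) fun x hx => by
    rw [hw.2.2 x hx, hv.2.2 x hx,
      intervalIntegral.integral_sub (hw.intervalIntegrable hx) (hv.intervalIntegrable hx)]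
    ring

end IntervalSobolev

theorem deriv_max_zero_of_hasDerivAt {w : ℝ → ℝ} {g x : ℝ} (hw : HasDerivAt w g x) :
    deriv (fun y => max (w y) 0) x = if 0 < w x then g else 0 := by
  rcases lt_trichotomy (w x) 0 with hneg | hzero | hpos
  · rw [if_neg hneg.not_gt]
    have : (fun y => max (w y) 0) =ᶠ[𝓝 x] fun _ => 0 := by
      filter_upwards [hw.continuousAt.eventually_lt continuousAt_const hneg] with y hy
      exact max_eq_right hy.le
    rw [this.deriv_eq, deriv_const]
  · rw [if_neg hzero.le.not_gt]
    -- a local minimum: `deriv` vanishes there whether or not the corner is differentiable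
    refine IsLocalMin.deriv_eq_zero (Eventually.of_forall fun y => ?_)
    simp [hzero]
  · rw [if_pos hpos]
    have : (fun y => max (w y) 0) =ᶠ[𝓝 x] w := by
      filter_upwards [continuousAt_const.eventually_lt hw.continuousAt hpos] with y hy
      exact max_eq_left hy.le
    rw [this.deriv_eq, hw.deriv]

theorem IntervalSobolev.max_zero {ℓ p : ℝ} {w w' : ℝ → ℝ} (hp : 0 ≤ p)
    (hw : IntervalSobolev ℓ p w w') (hc : ContinuousOn w' (Icc 0 ℓ)) :
    IntervalSobolev ℓ p (fun x => max (w x) 0) (deriv fun x => max (w x) 0) := by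
  set φ : ℝ → ℝ := fun x => max (w x) 0
  have hmeas : AEStronglyMeasurable (deriv φ) (volume.restrict (Ioo 0 ℓ)) :=
    (measurable_deriv φ).aestronglyMeasurable
  have hbound : ∀ᵐ x ∂volume.restrict (Ioo 0 ℓ), |deriv φ x| ≤ |w' x| := by
    refine (ae_restrict_iff' measurableSet_Ioo).2 (Eventually.of_forall fun x hx => ?_)
    rw [deriv_max_zero_of_hasDerivAt (hw.hasDerivAt hc hx)]
    split_ifs <;> simp
  obtain ⟨K, hK⟩ := hw.exists_lipschitzOnWith hc
  have hφ : LipschitzOnWith (1 * K) φ (Icc 0 ℓ) :=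
    (LipschitzWith.id.max_const 0).comp_lipschitzOnWith hK
  refine ⟨Integrable.mono hw.1 hmeas (by simpa using hbound), Integrable.mono hw.2.1 ?_ ?_,
    fun x hx => ?_⟩
  · exact (measurable_deriv φ).abs.pow_const p |>.aestronglyMeasurable
  · filter_upwards [hbound] with x hx
    simp only [Real.norm_eq_abs, abs_of_nonneg (Real.rpow_nonneg (abs_nonneg _) _)]
    exact Real.rpow_le_rpow (abs_nonneg _) hx hp
  · have hac := (hφ.mono (uIcc_subset_Icc ⟨le_rfl, hx.1.trans hx.2⟩ hx))
      |>.absolutelyContinuousOnInterval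
    linarith [hac.integral_deriv_eq_sub]

theorem eqOn_zero_of_integral_Ioo_eq_zero {a b : ℝ} (hab : a ≠ b) {h : ℝ → ℝ}
    (hc : ContinuousOn h (Icc a b)) (hnn : ∀ x ∈ Ioo a b, 0 ≤ h x)
    (hz : ∫ x in Ioo a b, h x = 0) : EqOn h 0 (Icc a b) := by
  have hae : h =ᵐ[volume.restrict (Ioo a b)] 0 :=
    (integral_eq_zero_iff_of_nonneg_ae
      ((ae_restrict_iff' measurableSet_Ioo).2 (Eventually.of_forall hnn))
      (hc.integrableOn_Icc.mono_set Ioo_subset_Icc_self)).1 hz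
  rw [Measure.restrict_congr_set Ioo_ae_eq_Icc] at hae
  exact Measure.eqOn_Icc_of_ae_eq volume hab hae hc continuousOn_const

theorem StrictMono.eq_of_sub_mul_sub_eq_zero {γ : ℝ → ℝ} (hγ : StrictMono γ) {s t : ℝ}
    (h : (γ s - γ t) * (s - t) = 0) : s = t := by
  rcases mul_eq_zero.1 h with h | h
  · exact hγ.injective (sub_eq_zero.1 h)
  · exact sub_eq_zero.1 h

namespace SolvesNeumann

variable {ℓ p : ℝ} {γ f : ℝ → ℝ} {a b₁ b₂ : ℝ} {v₁ u₁ u₁' v₂ u₂ u₂' : ℝ → ℝ}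

theorem integral_sub_eq (hℓ : 0 ≤ ℓ) (h₁ : SolvesNeumann ℓ p γ f a b₁ v₁ u₁ u₁')
    (h₂ : SolvesNeumann ℓ p γ f a b₂ v₂ u₂ u₂')
    (hρ₁ : ContinuousOn (fun x => rho p (u₁' x)) (Icc 0 ℓ))
    (hρ₂ : ContinuousOn (fun x => rho p (u₂' x)) (Icc 0 ℓ))
    {φ φ' : ℝ → ℝ} (hφ : IntervalSobolev ℓ p φ φ') :
    (∫ x in Ioo 0 ℓ, (v₁ x - v₂ x) * φ x)
      + ∫ x in Ioo 0 ℓ, (rho p (u₁' x) - rho p (u₂' x)) * φ' x = (b₁ - b₂) * φ ℓ := by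
  have hv : ∀ v : ℝ → ℝ, IntegrableOn v (Ioo 0 ℓ) →
      IntegrableOn (fun x => v x * φ x) (Ioo 0 ℓ) := fun v hv =>
    (((integrableOn_Icc_iff_integrableOn_Ioo).2 hv).mul_continuousOn (hφ.continuousOn hℓ)
      isCompact_Icc).mono_set Ioo_subset_Icc_self
  have hr : ∀ r : ℝ → ℝ, ContinuousOn r (Icc 0 ℓ) →
      IntegrableOn (fun x => r x * φ' x) (Ioo 0 ℓ) := fun r hr =>
    (hφ.integrableOn_Icc.continuousOn_mul hr isCompact_Icc).mono_set Ioo_subset_Icc_self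
  simp_rw [sub_mul]
  rw [integral_sub (hv _ h₁.1) (hv _ h₂.1), integral_sub (hr _ hρ₁) (hr _ hρ₂)]
  linear_combination h₁.2.2.2 φ φ' hφ - h₂.2.2.2 φ φ' hφ

theorem flux_eq_of_eqOn (hℓ : 0 ≤ ℓ) (hp : 1 < p) (h₁ : SolvesNeumann ℓ p γ f a b₁ v₁ u₁ u₁')
    (h₂ : SolvesNeumann ℓ p γ f a b₂ v₂ u₂ u₂') (hc₁ : ContinuousOn u₁' (Icc 0 ℓ))
    (hc₂ : ContinuousOn u₂' (Icc 0 ℓ)) (hv : EqOn v₁ v₂ (Ioo 0 ℓ)) : b₁ = b₂ := by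
  have hone : IntervalSobolev ℓ p (fun _ => 1) (fun _ => 0) :=
    .of_continuousOn (by linarith) continuousOn_const fun x _ => by simp
  have hid := h₁.integral_sub_eq hℓ h₂ ((continuous_rho hp).comp_continuousOn hc₁)
    ((continuous_rho hp).comp_continuousOn hc₂) hone
  have hzero : ∫ x in Ioo 0 ℓ, (v₁ x - v₂ x) * 1 = 0 :=
    setIntegral_eq_zero_of_forall_eq_zero fun x hx => by simp [hv hx]
  simp only [mul_zero, integral_zero, add_zero, mul_one] at hid hzero
  linarith

theorem eqOn_of_flux_mul_nonpos (hℓ : 0 < ℓ) (hp : 1 < p) (hγc : Continuous γ)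
    (hγm : StrictMono γ) (h₁ : SolvesNeumann ℓ p γ f a b₁ (fun x => γ (u₁ x)) u₁ u₁')
    (h₂ : SolvesNeumann ℓ p γ f a b₂ (fun x => γ (u₂ x)) u₂ u₂')
    (hc₁ : ContinuousOn u₁' (Icc 0 ℓ)) (hc₂ : ContinuousOn u₂' (Icc 0 ℓ))
    (hb : (b₁ - b₂) * (u₁ ℓ - u₂ ℓ) ≤ 0) : EqOn u₁ u₂ (Icc 0 ℓ) := by
  have hW := h₁.2.1.sub (by linarith) h₂.2.1 hc₁ hc₂
  have hid := h₁.integral_sub_eq hℓ.le h₂ ((continuous_rho hp).comp_continuousOn hc₁)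
    ((continuous_rho hp).comp_continuousOn hc₂) hW
  have hγpair : ∀ x, 0 ≤ (γ (u₁ x) - γ (u₂ x)) * (u₁ x - u₂ x) := fun x =>
    (hγm.monotone.monovary monotone_id).sub_mul_sub_nonneg (u₂ x) (u₁ x)
  have hρpair : ∀ x, 0 ≤ (rho p (u₁' x) - rho p (u₂' x)) * (u₁' x - u₂' x) := fun x =>
    ((rho_monotone hp).monovary monotone_id).sub_mul_sub_nonneg (u₂' x) (u₁' x)
  have hzero : ∫ x in Ioo 0 ℓ, (γ (u₁ x) - γ (u₂ x)) * (u₁ x - u₂ x) = 0 := by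
    have hγint : 0 ≤ ∫ x in Ioo 0 ℓ, (γ (u₁ x) - γ (u₂ x)) * (u₁ x - u₂ x) :=
      integral_nonneg hγpair
    have hρint : 0 ≤ ∫ x in Ioo 0 ℓ, (rho p (u₁' x) - rho p (u₂' x)) * (u₁' x - u₂' x) :=
      integral_nonneg hρpair
    linarith
  have hu₁ := h₁.2.1.continuousOn hℓ.le
  have hu₂ := h₂.2.1.continuousOn hℓ.le
  have hcont : ContinuousOn (fun x => (γ (u₁ x) - γ (u₂ x)) * (u₁ x - u₂ x)) (Icc 0 ℓ) :=
    ((hγc.comp_continuousOn hu₁).sub (hγc.comp_continuousOn hu₂)).mul (hu₁.sub hu₂)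
  exact fun x hx => hγm.eq_of_sub_mul_sub_eq_zero
    (eqOn_zero_of_integral_Ioo_eq_zero hℓ.ne hcont (fun x _ => hγpair x) hzero hx)

theorem le_of_flux_le (hℓ : 0 < ℓ) (hp : 1 < p) (hγc : Continuous γ) (hγm : StrictMono γ)
    (h₁ : SolvesNeumann ℓ p γ f a b₁ (fun x => γ (u₁ x)) u₁ u₁')
    (h₂ : SolvesNeumann ℓ p γ f a b₂ (fun x => γ (u₂ x)) u₂ u₂')
    (hc₁ : ContinuousOn u₁' (Icc 0 ℓ)) (hc₂ : ContinuousOn u₂' (Icc 0 ℓ)) (hb : b₁ ≤ b₂) :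
    ∀ x ∈ Icc (0 : ℝ) ℓ, u₁ x ≤ u₂ x := by
  have hW := h₁.2.1.sub (by linarith) h₂.2.1 hc₁ hc₂
  have hid := h₁.integral_sub_eq hℓ.le h₂ ((continuous_rho hp).comp_continuousOn hc₁)
    ((continuous_rho hp).comp_continuousOn hc₂) (hW.max_zero (by linarith) (hc₁.sub hc₂))
  have hγpair : ∀ x, 0 ≤ (γ (u₁ x) - γ (u₂ x)) * max (u₁ x - u₂ x) 0 := fun x => by
    rcases le_or_gt (u₁ x) (u₂ x) with hle | hlt
    · simp [hle]
    · exact mul_nonneg (sub_pos.2 (hγm hlt)).le (le_max_right _ _)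
  have hρpair : ∀ x ∈ Ioo 0 ℓ, 0 ≤ (rho p (u₁' x) - rho p (u₂' x)) *
      deriv (fun y => max (u₁ y - u₂ y) 0) x := fun x hx => by
    rw [deriv_max_zero_of_hasDerivAt (hW.hasDerivAt (hc₁.sub hc₂) hx)]
    split_ifs
    · exact ((rho_monotone hp).monovary monotone_id).sub_mul_sub_nonneg (u₂' x) (u₁' x)
    · rw [mul_zero]
  have hzero : ∫ x in Ioo 0 ℓ, (γ (u₁ x) - γ (u₂ x)) * max (u₁ x - u₂ x) 0 = 0 := by
    have hγint : 0 ≤ ∫ x in Ioo 0 ℓ, (γ (u₁ x) - γ (u₂ x)) * max (u₁ x - u₂ x) 0 :=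
      integral_nonneg hγpair
    have hρint : 0 ≤ ∫ x in Ioo 0 ℓ, (rho p (u₁' x) - rho p (u₂' x)) *
        deriv (fun y => max (u₁ y - u₂ y) 0) x :=
      setIntegral_nonneg measurableSet_Ioo hρpair
    nlinarith [le_max_right (u₁ ℓ - u₂ ℓ) 0]
  have hu₁ := h₁.2.1.continuousOn hℓ.le
  have hu₂ := h₂.2.1.continuousOn hℓ.le
  have hcont : ContinuousOn (fun x => (γ (u₁ x) - γ (u₂ x)) * max (u₁ x - u₂ x) 0) (Icc 0 ℓ) :=
    ((hγc.comp_continuousOn hu₁).sub (hγc.comp_continuousOn hu₂)).mul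
      (ContinuousOn.sup (hu₁.sub hu₂) continuousOn_const)
  intro x hx
  by_contra! hlt
  have hpos : 0 < (γ (u₁ x) - γ (u₂ x)) * max (u₁ x - u₂ x) 0 :=
    mul_pos (sub_pos.2 (hγm hlt)) (lt_max_of_lt_left (sub_pos.2 hlt))
  exact hpos.ne' (eqOn_zero_of_integral_Ioo_eq_zero hℓ.ne hcont (fun x _ => hγpair x) hzero hx)

theorem lt_at_right_of_flux_lt (hℓ : 0 < ℓ) (hp : 1 < p) (hγc : Continuous γ) (hγm : StrictMono γ)
    (h₁ : SolvesNeumann ℓ p γ f a b₁ (fun x => γ (u₁ x)) u₁ u₁')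
    (h₂ : SolvesNeumann ℓ p γ f a b₂ (fun x => γ (u₂ x)) u₂ u₂')
    (hc₁ : ContinuousOn u₁' (Icc 0 ℓ)) (hc₂ : ContinuousOn u₂' (Icc 0 ℓ)) (hb : b₁ < b₂) :
    u₁ ℓ < u₂ ℓ := by
  by_contra! hle
  have hu := h₁.eqOn_of_flux_mul_nonpos hℓ hp hγc hγm h₂ hc₁ hc₂
    (mul_nonpos_of_nonpos_of_nonneg (by linarith) (by linarith))
  have := h₁.flux_eq_of_eqOn hℓ.le hp h₂ hc₁ hc₂ fun x hx => by
    simp only [hu (Ioo_subset_Icc_self hx)]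
  linarith

end SolvesNeumann

theorem neumann_perturbed_right_flux_monotone_general
    (ℓ : ℝ) (hℓ : 0 < ℓ) (p : ℝ) (hp : 1 < p)
    (γ : ℝ → ℝ) (hγc : Continuous γ) (hγm : StrictMono γ)
    (f : ℝ → ℝ) (a b : ℝ)
    (u u' : ℝ → ℝ → ℝ)
    (hsol : ∀ ε : ℝ,
      SolvesNeumann ℓ p γ f a (b + ε) (fun x => γ (u ε x)) (u ε) (u' ε))
    (hC1 : ∀ ε : ℝ, ContinuousOn (u' ε) (Icc 0 ℓ)) :
    (∀ ε : ℝ, 0 < ε → (∀ x ∈ Icc (0:ℝ) ℓ, u 0 x ≤ u ε x) ∧ u 0 ℓ < u ε ℓ) ∧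
    (∀ ε : ℝ, ε < 0 → (∀ x ∈ Icc (0:ℝ) ℓ, u ε x ≤ u 0 x) ∧ u ε ℓ < u 0 ℓ) := by
  have compare : ∀ ε₁ ε₂ : ℝ, ε₁ < ε₂ →
      (∀ x ∈ Icc (0:ℝ) ℓ, u ε₁ x ≤ u ε₂ x) ∧ u ε₁ ℓ < u ε₂ ℓ := fun ε₁ ε₂ hε =>
    ⟨(hsol ε₁).le_of_flux_le hℓ hp hγc hγm (hsol ε₂) (hC1 ε₁) (hC1 ε₂) (by linarith),
      (hsol ε₁).lt_at_right_of_flux_lt hℓ hp hγc hγm (hsol ε₂) (hC1 ε₁) (hC1 ε₂) (by linarith)⟩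
  exact ⟨fun ε hε => compare 0 ε hε, fun ε hε => compare ε 0 hε⟩

/-- Lemma 3.1, point 1(i): monotone dependence of the solution of
(P^{γ,f}_{p,a,b+ε}) on ε, with strict growth at the right endpoint. Here `u ε` is the
C¹ representative of the solution `v_ε = γ ∘ u_ε`. -/
theorem neumann_perturbed_right_flux_monotone
    (ℓ : ℝ) (hℓ : 0 < ℓ) (p : ℝ) (hp : 1 < p)
    (γ : ℝ → ℝ) (hγc : Continuous γ) (hγm : StrictMono γ)
    (hγs : Function.Surjective γ) (hγ0 : γ 0 = 0)
    (f : ℝ → ℝ) (hf : IntegrableOn f (Ioo 0 ℓ) volume) (a b : ℝ)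
    (u u' : ℝ → ℝ → ℝ)
    (hsol : ∀ ε : ℝ,
      SolvesNeumann ℓ p γ f a (b + ε) (fun x => γ (u ε x)) (u ε) (u' ε))
    (hC1 : ∀ ε : ℝ, ContinuousOn (u' ε) (Icc 0 ℓ)) :
    (∀ ε : ℝ, 0 < ε → (∀ x ∈ Icc (0:ℝ) ℓ, u 0 x ≤ u ε x) ∧ u 0 ℓ < u ε ℓ) ∧
    (∀ ε : ℝ, ε < 0 → (∀ x ∈ Icc (0:ℝ) ℓ, u ε x ≤ u 0 x) ∧ u ε ℓ < u 0 ℓ) :=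
  neumann_perturbed_right_flux_monotone_general ℓ hℓ p hp γ hγc hγm f a b u u' hsol hC1
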